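/- Under Assumptions 1–3, let α*, α** ∈ I with α* < α**, s ≥ 0, α_s ∈ (α̲, α*), u_s ∈ B_{α_s}. Set T := T(α_s, α*), T̃ := T(α_s, α**), and T₀ := min{T, T̃}. Let u : [s, s+T) → B_{α*} be the solution of d/dt u = Au + Zu with u(s) = u_s in B_{α*}, and let ũ : [s, s+T̃) → B_{α**} be the solution of the same equation with the same initial value in the larger space B_{α**}. Then for every t ∈ [s, s+T₀) one has ũ(t) = u(t) ∈ B_{α*}. -/

import Mathlib

noncomputable section

open Set

/-- Convergence `f t → L` as `t → t₀` within the set `s`, with respect to the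
norm-like functional `nrm`. -/
def STendsTo {V : Type} [AddCommGroup V] (nrm : V → ℝ) (f : ℝ → V) (s : Set ℝ)
    (t₀ : ℝ) (L : V) : Prop :=
  ∀ ε > 0, ∃ δ > 0, ∀ t ∈ s, t ≠ t₀ → |t - t₀| < δ → nrm (f t - L) < ε

/-- Continuity of `f` on the set `s`, with respect to the norm-like functional `nrm`. -/
def SContinuousOn {V : Type} [AddCommGroup V] (nrm : V → ℝ) (f : ℝ → V) (s : Set ℝ) : Prop :=
  ∀ t₀ ∈ s, STendsTo nrm f s t₀ (f t₀)

/-- `f` has the derivative `L` at `t₀` within the set `s`, w.r.t. the norm-like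
functional `nrm`. -/
def SHasDerivWithin {V : Type} [AddCommGroup V] [Module ℝ V] (nrm : V → ℝ)
    (f : ℝ → V) (s : Set ℝ) (t₀ : ℝ) (L : V) : Prop :=
  STendsTo nrm (fun t => (t - t₀)⁻¹ • (f t - f t₀)) s t₀ L

/-- The setting of Assumptions 1–3 of the paper: an increasing scale of Banach
spaces `B α`, `α ∈ I = (α̲, ᾱ)`, realized as submodules of an ambient vector space `V`
with norms `nrm α`; an operator `A` generating `C₀`-semigroups `S α` on closed subspaces
`C α ⊆ B α` with domains `D α`; and an Ovsyannikov-type operator `Z` acting in the scale. -/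
structure OvsSystem where
  /-- the ambient vector space containing all spaces of the scale -/
  V : Type
  [grp : AddCommGroup V]
  [mod : Module ℝ V]
  /-- the lower bound `α̲ > 0` of the index interval -/
  aLow : ℝ
  /-- the upper bound `ᾱ ∈ (α̲, ∞]` of the index interval -/
  aHigh : EReal
  aLow_pos : 0 < aLow
  aLow_lt_aHigh : (aLow : EReal) < aHigh
  /-- the index interval `I = (α̲, ᾱ)` -/
  idx : Set ℝ
  idx_def : idx = {α : ℝ | aLow < α ∧ (α : EReal) < aHigh}
  -- Assumption 1: an increasing scale of Banach spaces
  /-- the spaces of the scale -/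
  B : ℝ → Submodule ℝ V
  /-- the norms of the spaces of the scale -/
  nrm : ℝ → V → ℝ
  nrm_nonneg : ∀ α ∈ idx, ∀ u ∈ B α, 0 ≤ nrm α u
  nrm_eq_zero : ∀ α ∈ idx, ∀ u ∈ B α, nrm α u = 0 → u = 0
  nrm_zero : ∀ α ∈ idx, nrm α 0 = 0
  nrm_add : ∀ α ∈ idx, ∀ u ∈ B α, ∀ v ∈ B α, nrm α (u + v) ≤ nrm α u + nrm α v
  nrm_smul : ∀ α ∈ idx, ∀ c : ℝ, ∀ u ∈ B α, nrm α (c • u) = |c| * nrm α u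
  /-- each `(B α, nrm α)` is complete -/
  complete : ∀ α ∈ idx, ∀ u : ℕ → V, (∀ n, u n ∈ B α) →
    (∀ ε > 0, ∃ K : ℕ, ∀ m ≥ K, ∀ n ≥ K, nrm α (u m - u n) < ε) →
    ∃ v ∈ B α, ∀ ε > 0, ∃ K : ℕ, ∀ n ≥ K, nrm α (u n - v) < ε
  /-- the scale is increasing: `B α' ⊆ B α''` for `α' ≤ α''` -/
  B_mono : ∀ α' ∈ idx, ∀ α'' ∈ idx, α' ≤ α'' → B α' ≤ B α''
  /-- the norms decrease along the scale: `‖u‖_{α''} ≤ ‖u‖_{α'}` for `α' ≤ α''` -/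
  nrm_mono : ∀ α' ∈ idx, ∀ α'' ∈ idx, α' ≤ α'' → ∀ u ∈ B α', nrm α'' u ≤ nrm α' u
  -- Assumption 2: the operator `A` and the semigroups `S α`
  /-- the closed subspaces `C α ⊆ B α` -/
  C : ℝ → Submodule ℝ V
  /-- the domains `D α ⊆ C α` -/
  D : ℝ → Submodule ℝ V
  D_le_C : ∀ α ∈ idx, D α ≤ C α
  C_le_B : ∀ α ∈ idx, C α ≤ B α
  /-- `C α` is closed in `(B α, nrm α)` -/
  C_closed : ∀ α ∈ idx, ∀ u : ℕ → V, (∀ n, u n ∈ C α) → ∀ v ∈ B α,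
    (∀ ε > 0, ∃ K : ℕ, ∀ n ≥ K, nrm α (u n - v) < ε) → v ∈ C α
  /-- `D α` is dense in `(C α, nrm α)` -/
  D_dense : ∀ α ∈ idx, ∀ v ∈ C α, ∀ ε > 0, ∃ u ∈ D α, nrm α (v - u) < ε
  /-- the operator `A` (defined on the whole of `V`; the paper requires it on `B_I`) -/
  A : V →ₗ[ℝ] V
  /-- `A` maps `B_I = ⋃_{α ∈ I} B_α` into itself -/
  A_maps : ∀ α ∈ idx, ∀ u ∈ B α, ∃ β ∈ idx, A u ∈ B β
  /-- the constant `ν ≥ 1` in the uniform exponential bound -/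
  nu : ℝ
  /-- the constant `ω ∈ ℝ` in the uniform exponential bound -/
  om : ℝ
  one_le_nu : 1 ≤ nu
  /-- the semigroups: `S α t` is the semigroup on `C α` at time `t` -/
  S : ℝ → ℝ → V → V
  S_mem : ∀ α ∈ idx, ∀ t ≥ 0, ∀ u ∈ C α, S α t u ∈ C α
  S_id : ∀ α ∈ idx, ∀ u ∈ C α, S α 0 u = u
  S_semigroup : ∀ α ∈ idx, ∀ t ≥ 0, ∀ t' ≥ 0, ∀ u ∈ C α,
    S α t (S α t' u) = S α (t + t') u
  S_add : ∀ α ∈ idx, ∀ t ≥ 0, ∀ u ∈ C α, ∀ v ∈ C α, S α t (u + v) = S α t u + S α t v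
  S_smul : ∀ α ∈ idx, ∀ t ≥ 0, ∀ c : ℝ, ∀ u ∈ C α, S α t (c • u) = c • S α t u
  /-- the uniform exponential bound `‖S_α(t)‖ ≤ ν e^{ωt}` -/
  S_bound : ∀ α ∈ idx, ∀ t ≥ 0, ∀ u ∈ C α, nrm α (S α t u) ≤ nu * Real.exp (om * t) * nrm α u
  /-- strong continuity of `S α` on `C α` -/
  S_cont : ∀ α ∈ idx, ∀ u ∈ C α, ∀ t₀ ≥ 0, ∀ ε > 0, ∃ δ > 0, ∀ t ≥ 0,
    |t - t₀| < δ → nrm α (S α t u - S α t₀ u) < ε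
  /-- `(A, D α)` is the generator of `S α`: on `D α` the semigroup is differentiable
  at `t = 0` with derivative `A u` -/
  S_gen : ∀ α ∈ idx, ∀ u ∈ D α, ∀ ε > 0, ∃ δ > 0, ∀ t : ℝ, 0 < t → t < δ →
    nrm α (t⁻¹ • (S α t u - u) - A u) < ε
  /-- `D α` is the full generator domain -/
  S_gen_max : ∀ α ∈ idx, ∀ u ∈ C α, ∀ v ∈ C α,
    (∀ ε > 0, ∃ δ > 0, ∀ t : ℝ, 0 < t → t < δ → nrm α (t⁻¹ • (S α t u - u) - v) < ε) →
    u ∈ D α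
  /-- `B α' ⊆ D α` for `α' < α` -/
  B_le_D : ∀ α' ∈ idx, ∀ α ∈ idx, α' < α → B α' ≤ D α
  /-- `B α'` is `S α`-invariant for `α' < α` -/
  B_invariant : ∀ α' ∈ idx, ∀ α ∈ idx, α' < α → ∀ t ≥ 0, ∀ u ∈ B α', S α t u ∈ B α'
  /-- `S α` restricted to `B α'` coincides with `S α'`, for `α' < α` -/
  S_restrict : ∀ α' ∈ idx, ∀ α ∈ idx, α' < α → ∀ t ≥ 0, ∀ u ∈ B α', S α t u = S α' t u
  -- Assumption 3: the Ovsyannikov operator `Z`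
  /-- the increasing continuous function `M : I → (0, ∞)` -/
  M : ℝ → ℝ
  /-- the increasing continuous function `N : I → (0, ∞)` -/
  Nf : ℝ → ℝ
  M_pos : ∀ α ∈ idx, 0 < M α
  N_pos : ∀ α ∈ idx, 0 < Nf α
  M_mono : ∀ α' ∈ idx, ∀ α'' ∈ idx, α' ≤ α'' → M α' ≤ M α''
  N_mono : ∀ α' ∈ idx, ∀ α'' ∈ idx, α' ≤ α'' → Nf α' ≤ Nf α''
  M_cont : ContinuousOn M idx
  N_cont : ContinuousOn Nf idx
  /-- the operator `Z` (defined on the whole of `V`; the paper requires it on `B_I`) -/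
  Z : V →ₗ[ℝ] V
  /-- `Z` maps `B α'` into `B α''` for `α̲ < α' < α'' ≤ α*`, `α* ∈ I` -/
  Z_mem : ∀ αst ∈ idx, ∀ α' α'' : ℝ, aLow < α' → α' < α'' → α'' ≤ αst →
    ∀ u ∈ B α', Z u ∈ B α''
  /-- the Ovsyannikov bound `‖Zu‖_{α''} ≤ (M(α*)/(α''-α') + N(α*)) ‖u‖_{α'}` -/
  Z_bound : ∀ αst ∈ idx, ∀ α' α'' : ℝ, aLow < α' → α' < α'' → α'' ≤ αst →
    ∀ u ∈ B α', nrm α'' (Z u) ≤ (M αst / (α'' - α') + Nf αst) * nrm α' u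

attribute [instance] OvsSystem.grp OvsSystem.mod

namespace OvsSystem

/-- The time horizon `T(α, β) = (β − α)/(e ν M(β))`. -/
def Tt (P : OvsSystem) (α β : ℝ) : ℝ := (β - α) / (Real.exp 1 * P.nu * P.M β)

/-- `u` is a solution on `[s, s+T)` in `B α*` of `d/dt u = Au + Zu`, `u(s) = u_s`:
it takes values in `B α*`, is continuous on `[s, s+T)`, satisfies
`Au(t), Zu(t) ∈ B α*` and the differential equation on `(s, s+T)`, and `u(s) = u_s`. -/
def IsSol (P : OvsSystem) (αst s T : ℝ) (us : P.V) (u : ℝ → P.V) : Prop :=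
  (∀ t ∈ Set.Ico s (s + T), u t ∈ P.B αst) ∧
  SContinuousOn (P.nrm αst) u (Set.Ico s (s + T)) ∧
  (∀ t ∈ Set.Ioo s (s + T), P.A (u t) ∈ P.B αst ∧ P.Z (u t) ∈ P.B αst) ∧
  (∀ t ∈ Set.Ioo s (s + T),
    SHasDerivWithin (P.nrm αst) u (Set.Ico s (s + T)) t (P.A (u t) + P.Z (u t))) ∧
  u s = us

end OvsSystem

/-!
Since `B_{α*}` embeds contractively into `B_{α**}`, both `u` and `ũ` solve the equation in
`B_{α**}` on `[s, s + T₀)`, so it suffices that a solution `w` in a space `B_β` with `w(s) = 0`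
vanishes. Fix `γ ∈ I` above `β`. For `β ≤ p < q ≤ γ`, the Duhamel map `τ ↦ S_q(σ - τ) w(τ)` has
right derivative `S_q(σ - τ) Z w(τ)`, so the Ovsyannikov bound for `Z` turns a bound for `w` in
`B_p` into one in `B_q` with a loss `M/(q - p) + N`. Climbing from `β` to `γ` in `n` equal steps
from a zero `a` of `w` gives `‖w(σ)‖_γ ≤ W (C(nM/(γ - β) + N))ⁿ (σ - a)ⁿ / n!`, where
`C = ν e^{|ω|(t - s)}` bounds the semigroups and `W` bounds `w` in `B_β` on `[s, t]`; since
`nⁿ/n! ≤ eⁿ` this tends to `0` as `n → ∞` as long as `σ - a` is below a length independent of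
`a`. Stepping from `s` by this length shows `w = 0`.
-/

open Filter Topology

theorem sTendsTo_iff_eventually {V : Type} [AddCommGroup V] {nrm : V → ℝ} {f : ℝ → V}
    {s : Set ℝ} {t₀ : ℝ} {L : V} :
    STendsTo nrm f s t₀ L ↔ ∀ ε > 0, ∀ᶠ t in 𝓝[s \ {t₀}] t₀, nrm (f t - L) < ε := by
  refine forall₂_congr fun ε _ => ?_
  rw [eventually_nhdsWithin_iff, Metric.eventually_nhds_iff]
  simp only [Real.dist_eq, Set.mem_sdiff, mem_singleton_iff, and_imp]
  exact ⟨fun ⟨δ, hδ, h⟩ => ⟨δ, hδ, fun t ht hs hne => h t hs hne ht⟩,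
    fun ⟨δ, hδ, h⟩ => ⟨δ, hδ, fun t hs hne ht => h ht hs hne⟩⟩

theorem STendsTo.mono_set {V : Type} [AddCommGroup V] {nrm : V → ℝ} {f : ℝ → V}
    {s s' : Set ℝ} {t₀ : ℝ} {L : V} (h : STendsTo nrm f s t₀ L) (hs : s' ⊆ s) :
    STendsTo nrm f s' t₀ L := fun ε hε =>
  let ⟨δ, hδ, hf⟩ := h ε hε
  ⟨δ, hδ, fun t ht => hf t (hs ht)⟩

theorem STendsTo.of_nrm_le {V : Type} [AddCommGroup V] {nrm nrm' : V → ℝ} {f : ℝ → V}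
    {s : Set ℝ} {t₀ : ℝ} {L : V} (h : STendsTo nrm f s t₀ L)
    (hle : ∀ t ∈ s, nrm' (f t - L) ≤ nrm (f t - L)) : STendsTo nrm' f s t₀ L := fun ε hε =>
  let ⟨δ, hδ, hf⟩ := h ε hε
  ⟨δ, hδ, fun t ht hne hd => (hle t ht).trans_lt (hf t ht hne hd)⟩

open Nat in
theorem pow_mul_div_factorial_le_exp_one_mul_pow (n : ℕ) {y : ℝ} (hy : 0 ≤ y) :
    (n * y) ^ n / n ! ≤ (Real.exp 1 * y) ^ n := by
  rw [mul_pow, mul_pow, mul_div_right_comm, Real.exp_one_pow]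
  exact mul_le_mul_of_nonneg_right (Real.pow_div_factorial_le_exp (n : ℝ) n.cast_nonneg n)
    (pow_nonneg hy n)

open Nat in
theorem hasDerivAt_sub_pow_succ_div_factorial (a : ℝ) (k : ℕ) (x : ℝ) :
    HasDerivAt (fun y => (y - a) ^ (k + 1) / (k + 1)!) ((x - a) ^ k / k !) x := by
  refine ((((hasDerivAt_id x).sub_const a).pow (k + 1)).div_const ((k + 1)! : ℝ)).congr_deriv ?_
  rw [Nat.factorial_succ]
  push_cast
  field_simp
  simp

namespace OvsSystem

variable (P : OvsSystem)

section Index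

theorem aLow_lt_of_mem_idx {α : ℝ} (hα : α ∈ P.idx) : P.aLow < α := by
  rw [P.idx_def] at hα
  exact hα.1

theorem mem_idx_of_le {p γ : ℝ} (hp : P.aLow < p) (hpγ : p ≤ γ) (hγ : γ ∈ P.idx) :
    p ∈ P.idx := by
  rw [P.idx_def] at hγ ⊢
  exact ⟨hp, (EReal.coe_le_coe_iff.mpr hpγ).trans_lt hγ.2⟩

theorem exists_gt_mem_idx {α : ℝ} (hα : α ∈ P.idx) : ∃ γ ∈ P.idx, α < γ := by
  have hα' := hα
  rw [P.idx_def] at hα'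
  obtain ⟨z, hαz, hz⟩ := exists_between hα'.2
  have hz_top : z ≠ ⊤ := hz.ne_top
  have hz_bot : z ≠ ⊥ := hαz.ne_bot
  have hαγ : α < z.toReal := by
    rwa [← EReal.coe_lt_coe_iff, EReal.coe_toReal hz_top hz_bot]
  refine ⟨z.toReal, ?_, hαγ⟩
  rw [P.idx_def]
  exact ⟨hα'.1.trans hαγ, by rwa [EReal.coe_toReal hz_top hz_bot]⟩

end Index

section Norm

variable {P} {α : ℝ} (hα : α ∈ P.idx)
include hα

theorem nrm_neg {x : P.V} (hx : x ∈ P.B α) : P.nrm α (-x) = P.nrm α x := by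
  simpa using P.nrm_smul α hα (-1) x hx

theorem nrm_sub_comm {x y : P.V} (hx : x ∈ P.B α) (hy : y ∈ P.B α) :
    P.nrm α (x - y) = P.nrm α (y - x) := by
  rw [← neg_sub, nrm_neg hα (sub_mem hy hx)]

theorem nrm_sub_le {x y : P.V} (hx : x ∈ P.B α) (hy : y ∈ P.B α) :
    P.nrm α (x - y) ≤ P.nrm α x + P.nrm α y := by
  simpa [sub_eq_add_neg, nrm_neg hα hy] using P.nrm_add α hα x hx (-y) (neg_mem hy)

theorem nrm_sub_nrm_le {x y : P.V} (hx : x ∈ P.B α) (hy : y ∈ P.B α) :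
    P.nrm α x - P.nrm α y ≤ P.nrm α (x - y) := by
  simpa using P.nrm_add α hα (x - y) (sub_mem hx hy) y hy

theorem abs_nrm_sub_nrm_le {x y : P.V} (hx : x ∈ P.B α) (hy : y ∈ P.B α) :
    |P.nrm α x - P.nrm α y| ≤ P.nrm α (x - y) :=
  abs_sub_le_iff.mpr ⟨nrm_sub_nrm_le hα hx hy,
    (nrm_sub_nrm_le hα hy hx).trans_eq (nrm_sub_comm hα hy hx)⟩

end Norm

def semigroupBound (R : ℝ) : ℝ := P.nu * Real.exp (|P.om| * R)

theorem semigroupBound_pos (R : ℝ) : 0 < P.semigroupBound R :=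
  mul_pos (zero_lt_one.trans_le P.one_le_nu) (Real.exp_pos _)

section Semigroup

variable {P} {α : ℝ} (hα : α ∈ P.idx)
include hα

theorem S_zero {t : ℝ} (ht : 0 ≤ t) : P.S α t 0 = 0 := by
  simpa using P.S_smul α hα t ht 0 0 (zero_mem _)

theorem S_sub {t : ℝ} (ht : 0 ≤ t) {x y : P.V} (hx : x ∈ P.C α) (hy : y ∈ P.C α) :
    P.S α t (x - y) = P.S α t x - P.S α t y := by
  rw [sub_eq_add_neg, sub_eq_add_neg, ← neg_one_smul ℝ y, P.S_add α hα t ht x hx _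
    (Submodule.smul_mem _ _ hy), P.S_smul α hα t ht _ y hy, neg_one_smul]

theorem S_mem_B {t : ℝ} (ht : 0 ≤ t) {x : P.V} (hx : x ∈ P.C α) : P.S α t x ∈ P.B α :=
  P.C_le_B α hα (P.S_mem α hα t ht x hx)

theorem nrm_S_le {t R : ℝ} (ht : 0 ≤ t) (htR : t ≤ R) {x : P.V} (hx : x ∈ P.C α) :
    P.nrm α (P.S α t x) ≤ P.semigroupBound R * P.nrm α x := by
  refine (P.S_bound α hα t ht x hx).trans (mul_le_mul_of_nonneg_right ?_
    (P.nrm_nonneg α hα x (P.C_le_B α hα hx)))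
  have hωt : P.om * t ≤ |P.om| * R :=
    (mul_le_mul_of_nonneg_right (le_abs_self _) ht).trans
      (mul_le_mul_of_nonneg_left htR (abs_nonneg _))
  unfold semigroupBound
  gcongr
  linarith [P.one_le_nu]

theorem S_sub_S_add_eq_smul {r h : ℝ} (hr : 0 ≤ r) (hh : 0 < h) {x y : P.V} (hx : x ∈ P.C α)
    (hy : y ∈ P.C α) :
    P.S α r y - P.S α (r + h) x =
      h • P.S α r (h⁻¹ • (y - x) - h⁻¹ • (P.S α h x - x)) := by
  have hShx := P.S_mem α hα h hh.le x hx
  have hv : h⁻¹ • (y - x) - h⁻¹ • (P.S α h x - x) ∈ P.C α :=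
    sub_mem (Submodule.smul_mem _ _ (sub_mem hy hx)) (Submodule.smul_mem _ _ (sub_mem hShx hx))
  rw [← P.S_smul α hα r hr _ _ hv, smul_sub, smul_inv_smul₀ hh.ne', smul_inv_smul₀ hh.ne',
    sub_sub_sub_cancel_right, ← P.S_semigroup α hα r hr h hh.le x hx, S_sub hα hr hy hShx]

theorem eventually_nrm_S_slope_sub_lt {u : P.V} (hu : u ∈ P.D α) (τ : ℝ) {ε : ℝ} (hε : 0 < ε) :
    ∀ᶠ y in 𝓝[>] τ, P.nrm α ((y - τ)⁻¹ • (P.S α (y - τ) u - u) - P.A u) < ε := by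
  obtain ⟨δ, hδ, h⟩ := P.S_gen α hα u hu ε hε
  filter_upwards [Ioo_mem_nhdsGT (show τ < τ + δ by linarith)] with y hy
  exact h (y - τ) (by linarith [hy.1]) (by linarith [hy.2])

end Semigroup

variable {P : OvsSystem}

theorem sTendsTo_sub {α : ℝ} (hα : α ∈ P.idx) {f g : ℝ → P.V} {s : Set ℝ} {t₀ : ℝ} {L L' : P.V}
    (hfB : ∀ t ∈ s, f t - L ∈ P.B α) (hgB : ∀ t ∈ s, g t - L' ∈ P.B α)
    (hf : STendsTo (P.nrm α) f s t₀ L) (hg : STendsTo (P.nrm α) g s t₀ L') :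
    STendsTo (P.nrm α) (fun t => f t - g t) s t₀ (L - L') := by
  rw [sTendsTo_iff_eventually] at hf hg ⊢
  intro ε hε
  filter_upwards [hf (ε / 2) (half_pos hε), hg (ε / 2) (half_pos hε), self_mem_nhdsWithin]
    with t hft hgt ht
  rw [show f t - g t - (L - L') = (f t - L) - (g t - L') by abel]
  linarith [nrm_sub_le hα (hfB t ht.1) (hgB t ht.1)]

theorem nrm_sub_le_of_slope_le {α : ℝ} (hα : α ∈ P.idx) {g : ℝ → P.V} {Φ φ : ℝ → ℝ} {a b : ℝ}
    (hab : a ≤ b) (hgB : ∀ x ∈ Icc a b, g x ∈ P.B α)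
    (hgc : ∀ x ∈ Icc a b, ∀ ε > 0, ∀ᶠ y in 𝓝[Icc a b] x, P.nrm α (g y - g x) < ε)
    (hΦ : ∀ x, HasDerivAt Φ (φ x) x)
    (hslope : ∀ x ∈ Ioo a b, ∀ ε > 0,
      ∀ᶠ y in 𝓝[>] x, P.nrm α (g y - g x) ≤ (y - x) * (φ x + ε)) :
    P.nrm α (g b - g a) ≤ Φ b - Φ a := by
  set f : ℝ → ℝ := fun x => P.nrm α (g x - g a)
  have hga := hgB a ⟨le_rfl, hab⟩
  have hf_sub : ∀ x ∈ Icc a b, ∀ y ∈ Icc a b, f y - f x ≤ P.nrm α (g y - g x) := by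
    intro x hx y hy
    simpa using nrm_sub_nrm_le hα (sub_mem (hgB y hy) hga) (sub_mem (hgB x hx) hga)
  have hfc : ContinuousOn f (Icc a b) := by
    intro x hx
    rw [Metric.continuousWithinAt_iff']
    intro ε hε
    filter_upwards [hgc x hx ε hε, self_mem_nhdsWithin] with y hy hyI
    rw [Real.dist_eq, abs_sub_lt_iff]
    constructor
    · linarith [hf_sub x hx y hyI]
    · linarith [hf_sub y hyI x hx, nrm_sub_comm hα (hgB x hx) (hgB y hyI)]
  rcases hab.eq_or_lt with rfl | hab
  · simp [P.nrm_zero α hα]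
  -- The slope bound is only available on `(a, b)`: fence on `[a', b]`, then let `a' → a`.
  have hfence : ∀ a' ∈ Ioo a b, f b ≤ f a' + (Φ b - Φ a') := by
    intro a' ha'
    have hsub : Icc a' b ⊆ Icc a b := Icc_subset_Icc_left ha'.1.le
    refine image_le_of_liminf_slope_right_le_deriv_boundary (hfc.mono hsub) (by simp)
      (fun x _ => (((hΦ x).sub_const (Φ a')).const_add (f a')).continuousAt.continuousWithinAt)
      (fun x _ => (((hΦ x).sub_const (Φ a')).const_add (f a')).hasDerivWithinAt)
      (fun x hx r hr => ?_) ⟨ha'.2.le, le_rfl⟩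
    have hxI : x ∈ Icc a b := hsub (Ico_subset_Icc_self hx)
    refine Eventually.frequently ?_
    filter_upwards [hslope x ⟨ha'.1.trans_le hx.1, hx.2⟩ ((r - φ x) / 2) (by linarith),
      self_mem_nhdsWithin, Ioo_mem_nhdsGT hx.2] with y hy hyx hyb
    have hyI : y ∈ Icc a b := ⟨hxI.1.trans hyx.out.le, hyb.2.le⟩
    rw [slope_def_field, div_lt_iff₀ (sub_pos.mpr hyx.out)]
    nlinarith [hf_sub x hxI y hyI, sub_pos.mpr hyx.out]
  have hlim : Tendsto (fun a' => f a' + (Φ b - Φ a')) (𝓝[>] a) (𝓝 (f a + (Φ b - Φ a))) := by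
    have hIcc : Icc a b ∈ 𝓝[>] a := mem_of_superset (Ioo_mem_nhdsGT hab) Ioo_subset_Icc_self
    exact ((hfc a ⟨le_rfl, hab.le⟩).mono_of_mem_nhdsWithin hIcc).tendsto.add
      (tendsto_const_nhds.sub ((hΦ a).continuousAt.tendsto.mono_left nhdsWithin_le_nhds))
  have h := ge_of_tendsto hlim (by filter_upwards [Ioo_mem_nhdsGT hab] using hfence)
  simpa [f, P.nrm_zero α hα] using h

namespace IsSol

variable {α β s T : ℝ} {us : P.V} {u w : ℝ → P.V}

theorem mono_time (hu : P.IsSol α s T us u) {T' : ℝ} (hT : T' ≤ T) : P.IsSol α s T' us u := by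
  obtain ⟨hmem, hcont, hAZ, hderiv, hinit⟩ := hu
  have hIco : Ico s (s + T') ⊆ Ico s (s + T) := Ico_subset_Ico_right (by linarith)
  have hIoo : Ioo s (s + T') ⊆ Ioo s (s + T) := Ioo_subset_Ioo_right (by linarith)
  exact ⟨fun t ht => hmem t (hIco ht), fun t ht => (hcont t (hIco ht)).mono_set hIco,
    fun t ht => hAZ t (hIoo ht), fun t ht => STendsTo.mono_set (hderiv t (hIoo ht)) hIco, hinit⟩

theorem mono_index (hu : P.IsSol α s T us u) (hα : α ∈ P.idx) {α' : ℝ} (hα' : α' ∈ P.idx)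
    (hαα' : α ≤ α') : P.IsSol α' s T us u := by
  obtain ⟨hmem, hcont, hAZ, hderiv, hinit⟩ := hu
  have hB := P.B_mono α hα α' hα' hαα'
  have hnrm := P.nrm_mono α hα α' hα' hαα'
  refine ⟨fun t ht => hB (hmem t ht), fun t₀ ht₀ => (hcont t₀ ht₀).of_nrm_le fun t ht =>
      hnrm _ (sub_mem (hmem t ht) (hmem t₀ ht₀)),
    fun t ht => ⟨hB (hAZ t ht).1, hB (hAZ t ht).2⟩, fun t ht => ?_, hinit⟩
  refine STendsTo.of_nrm_le (hderiv t ht) fun t' ht' => hnrm _ ?_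
  exact sub_mem (Submodule.smul_mem _ _ (sub_mem (hmem t' ht') (hmem t (Ioo_subset_Ico_self ht))))
    (add_mem (hAZ t ht).1 (hAZ t ht).2)

theorem sub (hu : P.IsSol α s T us u) {vs : P.V} {v : ℝ → P.V} (hv : P.IsSol α s T vs v)
    (hα : α ∈ P.idx) : P.IsSol α s T (us - vs) (u - v) := by
  obtain ⟨hmem, hcont, hAZ, hderiv, hinit⟩ := hu
  obtain ⟨hmem', hcont', hAZ', hderiv', hinit'⟩ := hv
  refine ⟨fun t ht => sub_mem (hmem t ht) (hmem' t ht), fun t₀ ht₀ => ?_, fun t ht => ?_,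
    fun t ht => ?_, by simp [hinit, hinit']⟩
  · exact sTendsTo_sub hα (fun t ht => sub_mem (hmem t ht) (hmem t₀ ht₀))
      (fun t ht => sub_mem (hmem' t ht) (hmem' t₀ ht₀)) (hcont t₀ ht₀) (hcont' t₀ ht₀)
  · simp only [Pi.sub_apply, map_sub]
    exact ⟨sub_mem (hAZ t ht).1 (hAZ' t ht).1, sub_mem (hAZ t ht).2 (hAZ' t ht).2⟩
  · have htIco := Ioo_subset_Ico_self ht
    have h := sTendsTo_sub hα
      (fun t' ht' => sub_mem (Submodule.smul_mem _ _ (sub_mem (hmem t' ht') (hmem t htIco)))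
        (add_mem (hAZ t ht).1 (hAZ t ht).2))
      (fun t' ht' => sub_mem (Submodule.smul_mem _ _ (sub_mem (hmem' t' ht') (hmem' t htIco)))
        (add_mem (hAZ' t ht).1 (hAZ' t ht).2)) (hderiv t ht) (hderiv' t ht)
    unfold SHasDerivWithin
    convert h using 2 with t'
    · simp only [Pi.sub_apply, smul_sub]
      abel
    · simp only [Pi.sub_apply, map_sub]
      abel

theorem eventually_nrm_sub_lt (hw : P.IsSol β s T us w) (hβ : β ∈ P.idx) {x : ℝ}
    (hx : x ∈ Ico s (s + T)) {ε : ℝ} (hε : 0 < ε) :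
    ∀ᶠ y in 𝓝[Ico s (s + T)] x, P.nrm β (w y - w x) < ε := by
  obtain ⟨δ, hδ, h⟩ := hw.2.1 x hx ε hε
  rw [eventually_nhdsWithin_iff, Metric.eventually_nhds_iff]
  refine ⟨δ, hδ, fun y hy hyI => ?_⟩
  rcases eq_or_ne y x with rfl | hne
  · simpa [P.nrm_zero β hβ] using hε
  · exact h y hyI hne hy

theorem eventually_nrm_S_sub_lt (hw : P.IsSol β s T us w) (hβ : β ∈ P.idx) {q : ℝ}
    (hq : q ∈ P.idx) (hβq : β < q) {a σ : ℝ} (ha : s ≤ a) (hσ : σ < s + T) {x : ℝ}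
    (hx : x ∈ Icc a σ) {ε : ℝ} (hε : 0 < ε) :
    ∀ᶠ y in 𝓝[Icc a σ] x,
      P.nrm q (P.S q (σ - y) (w y) - P.S q (σ - x) (w x)) < ε := by
  have hsub : Icc a σ ⊆ Ico s (s + T) := fun y hy => ⟨ha.trans hy.1, hy.2.trans_lt hσ⟩
  have hC : ∀ y ∈ Icc a σ, w y ∈ P.C q := fun y hy =>
    P.D_le_C q hq (P.B_le_D β hβ q hq hβq (hw.1 y (hsub hy)))
  set C := P.semigroupBound (σ - a)
  have hC0 : 0 < C := P.semigroupBound_pos _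
  obtain ⟨δ, hδ, hScont⟩ := P.S_cont q hq (w x) (hC x hx) (σ - x) (by linarith [hx.2])
    (ε / 2) (half_pos hε)
  have hnear : ∀ᶠ y in 𝓝 x, |y - x| < δ :=
    Metric.eventually_nhds_iff.mpr ⟨δ, hδ, fun y hy => by rwa [Real.dist_eq] at hy⟩
  filter_upwards [nhdsWithin_mono x hsub (hw.eventually_nrm_sub_lt hβ (hsub hx)
      (div_pos hε (mul_pos two_pos hC0))), eventually_nhdsWithin_of_eventually_nhds hnear,
    self_mem_nhdsWithin] with y hwy hyx hy
  have hσy : 0 ≤ σ - y := by linarith [hy.2]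
  rw [show P.S q (σ - y) (w y) - P.S q (σ - x) (w x) = P.S q (σ - y) (w y - w x) +
      (P.S q (σ - y) (w x) - P.S q (σ - x) (w x)) by
    rw [S_sub hq hσy (hC y hy) (hC x hx)]; abel]
  have hjump : P.nrm q (P.S q (σ - y) (w y - w x)) < ε / 2 :=
    calc P.nrm q (P.S q (σ - y) (w y - w x)) ≤ C * P.nrm q (w y - w x) :=
          nrm_S_le hq hσy (by linarith [hy.1]) (sub_mem (hC y hy) (hC x hx))
      _ ≤ C * P.nrm β (w y - w x) := by
          gcongr
          exact P.nrm_mono β hβ q hq hβq.le _ (sub_mem (hw.1 y (hsub hy)) (hw.1 x (hsub hx)))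
      _ < C * (ε / (2 * C)) := by gcongr
      _ = ε / 2 := by field_simp
  have hshift : P.nrm q (P.S q (σ - y) (w x) - P.S q (σ - x) (w x)) < ε / 2 :=
    hScont (σ - y) hσy (by rw [show σ - y - (σ - x) = -(y - x) by ring, abs_neg]; exact hyx)
  linarith [P.nrm_add q hq (P.S q (σ - y) (w y - w x))
    (S_mem_B hq hσy (sub_mem (hC y hy) (hC x hx))) (P.S q (σ - y) (w x) - P.S q (σ - x) (w x))
    (sub_mem (S_mem_B hq hσy (hC x hx)) (S_mem_B hq (by linarith [hx.2]) (hC x hx)))]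

theorem exists_nrm_le (hw : P.IsSol β s T us w) (hβ : β ∈ P.idx) {t : ℝ}
    (ht : t ∈ Ico s (s + T)) : ∃ W, ∀ x ∈ Icc s t, P.nrm β (w x) ≤ W := by
  have hsub : Icc s t ⊆ Ico s (s + T) := Icc_subset_Ico_right ht.2
  have hc : ContinuousOn (fun x => P.nrm β (w x)) (Icc s t) := by
    intro x hx
    rw [Metric.continuousWithinAt_iff']
    intro ε hε
    filter_upwards [nhdsWithin_mono x hsub (hw.eventually_nrm_sub_lt hβ (hsub hx) hε),
      self_mem_nhdsWithin] with y hy hyI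
    exact (abs_nrm_sub_nrm_le hβ (hw.1 y (hsub hyI)) (hw.1 x (hsub hx))).trans_lt hy
  obtain ⟨W, hW⟩ := isCompact_Icc.bddAbove_image hc
  exact ⟨W, fun x hx => hW (mem_image_of_mem _ hx)⟩

theorem eventually_nrm_slope_sub_lt (hw : P.IsSol β s T us w) {τ : ℝ} (hτ : τ ∈ Ioo s (s + T))
    {ε : ℝ} (hε : 0 < ε) :
    ∀ᶠ y in 𝓝[>] τ, P.nrm β ((y - τ)⁻¹ • (w y - w τ) - (P.A (w τ) + P.Z (w τ))) < ε := by
  have hle : 𝓝[>] τ ≤ 𝓝[Ico s (s + T) \ {τ}] τ := nhdsWithin_le_iff.mpr <|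
    mem_of_superset (Ioo_mem_nhdsGT hτ.2) fun y hy => ⟨⟨hτ.1.le.trans hy.1.le, hy.2⟩, hy.1.ne'⟩
  exact hle (sTendsTo_iff_eventually.mp (hw.2.2.2.1 τ hτ) ε hε)

/-- Right difference quotients of the Duhamel map `y ↦ S_q(σ - y) w(y)`: the generator part of
`w' = Aw + Zw` cancels against the derivative of the semigroup, leaving only `S_q(σ - τ) Z w(τ)`. -/
theorem eventually_nrm_S_sub_le (hw : P.IsSol β s T us w) (hβ : β ∈ P.idx) {q : ℝ}
    (hq : q ∈ P.idx) (hβq : β < q) {τ σ R : ℝ} (hτ : τ ∈ Ioo s (s + T)) (hτσ : τ < σ)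
    (hR : σ - τ ≤ R) {ε : ℝ} (hε : 0 < ε) :
    ∀ᶠ y in 𝓝[>] τ, P.nrm q (P.S q (σ - y) (w y) - P.S q (σ - τ) (w τ)) ≤
      (y - τ) * (P.semigroupBound R * P.nrm q (P.Z (w τ)) + ε) := by
  set C := P.semigroupBound R
  have hC0 : 0 < C := P.semigroupBound_pos R
  have hBC : P.B β ≤ P.C q := fun x hx => P.D_le_C q hq (P.B_le_D β hβ q hq hβq hx)
  have hwτ := hw.1 τ (Ioo_subset_Ico_self hτ)
  have hAZ := hw.2.2.1 τ hτ
  have hε' : 0 < ε / (2 * C) := div_pos hε (mul_pos two_pos hC0)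
  filter_upwards [hw.eventually_nrm_slope_sub_lt hτ hε',
    eventually_nrm_S_slope_sub_lt hq (P.B_le_D β hβ q hq hβq hwτ) τ hε',
    Ioo_mem_nhdsGT hτσ, Ioo_mem_nhdsGT hτ.2] with y hquot hgen hyσ hyT
  have hh : 0 < y - τ := sub_pos.mpr hyσ.1
  have hr : 0 ≤ σ - y := by linarith [hyσ.2]
  have hwy := hw.1 y ⟨hτ.1.le.trans hyT.1.le, hyT.2⟩
  set d₁ := (y - τ)⁻¹ • (w y - w τ) - (P.A (w τ) + P.Z (w τ))
  set d₂ := (y - τ)⁻¹ • (P.S q (y - τ) (w τ) - w τ) - P.A (w τ)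
  have hd₁ : d₁ ∈ P.B β :=
    sub_mem (Submodule.smul_mem _ _ (sub_mem hwy hwτ)) (add_mem hAZ.1 hAZ.2)
  have hd₂ : d₂ ∈ P.C q := sub_mem (Submodule.smul_mem _ _
    (sub_mem (P.S_mem q hq _ hh.le _ (hBC hwτ)) (hBC hwτ))) (hBC hAZ.1)
  have hv : P.Z (w τ) + (d₁ - d₂) ∈ P.C q := add_mem (hBC hAZ.2) (sub_mem (hBC hd₁) hd₂)
  have hnv : P.nrm q (P.Z (w τ) + (d₁ - d₂)) ≤ P.nrm q (P.Z (w τ)) + ε / C := by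
    have h₁ : P.nrm q d₁ ≤ P.nrm β d₁ := P.nrm_mono β hβ q hq hβq.le d₁ hd₁
    have h₂ := P.nrm_add q hq _ (P.C_le_B q hq (hBC hAZ.2)) _
      (P.C_le_B q hq (sub_mem (hBC hd₁) hd₂))
    have h₃ := nrm_sub_le hq (P.C_le_B q hq (hBC hd₁)) (P.C_le_B q hq hd₂)
    have : ε / (2 * C) + ε / (2 * C) = ε / C := by field_simp; ring
    linarith
  rw [show σ - τ = (σ - y) + (y - τ) by ring, S_sub_S_add_eq_smul hq hr hh (hBC hwτ) (hBC hwy),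
    show (y - τ)⁻¹ • (w y - w τ) - (y - τ)⁻¹ • (P.S q (y - τ) (w τ) - w τ) =
      P.Z (w τ) + (d₁ - d₂) by simp only [d₁, d₂]; abel,
    P.nrm_smul q hq _ _ (S_mem_B hq hr hv), abs_of_pos hh]
  gcongr
  calc P.nrm q (P.S q (σ - y) (P.Z (w τ) + (d₁ - d₂)))
      ≤ C * P.nrm q (P.Z (w τ) + (d₁ - d₂)) := nrm_S_le hq hr (by linarith [hyσ.1]) hv
    _ ≤ C * (P.nrm q (P.Z (w τ)) + ε / C) := by gcongr
    _ = C * P.nrm q (P.Z (w τ)) + ε := by field_simp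

/-- Variation of constants `w(σ) = ∫_a^σ S_q(σ - τ) Z w(τ) dτ`, estimated through the mean value
inequality for the Duhamel map. -/
theorem nrm_le_of_nrm_le (hw : P.IsSol β s T us w) (hβ : β ∈ P.idx) {p q γ : ℝ}
    (hγ : γ ∈ P.idx) (hβp : β ≤ p) (hpq : p < q) (hqγ : q ≤ γ) {a b R : ℝ} (ha : s ≤ a)
    (hb : b < s + T) (hR : b - a ≤ R) (hwa : w a = 0) {Ψ ψ : ℝ → ℝ}
    (hΨ : ∀ x, HasDerivAt Ψ (ψ x) x) (hψ : ∀ x ∈ Icc a b, P.nrm p (w x) ≤ ψ x) {σ : ℝ}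
    (hσ : σ ∈ Icc a b) :
    P.nrm q (w σ) ≤
      P.semigroupBound R * (P.M γ / (q - p) + P.Nf γ) * (Ψ σ - Ψ a) := by
  have hβ_low := P.aLow_lt_of_mem_idx hβ
  have hp : p ∈ P.idx := P.mem_idx_of_le (by linarith) (by linarith) hγ
  have hq : q ∈ P.idx := P.mem_idx_of_le (by linarith) hqγ hγ
  have hβq : β < q := hβp.trans_lt hpq
  have hIcc : Icc a σ ⊆ Ico s (s + T) := fun y hy => ⟨ha.trans hy.1, by linarith [hy.2, hσ.2]⟩
  have hC : ∀ y ∈ Icc a σ, w y ∈ P.C q := fun y hy =>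
    P.D_le_C q hq (P.B_le_D β hβ q hq hβq (hw.1 y (hIcc hy)))
  have hMN : 0 < P.M γ / (q - p) + P.Nf γ :=
    add_pos (div_pos (P.M_pos γ hγ) (sub_pos.mpr hpq)) (P.N_pos γ hγ)
  set K := P.semigroupBound R * (P.M γ / (q - p) + P.Nf γ)
  have hslope : ∀ x ∈ Ioo a σ, ∀ ε > 0, ∀ᶠ y in 𝓝[>] x,
      P.nrm q (P.S q (σ - y) (w y) - P.S q (σ - x) (w x)) ≤ (y - x) * (K * ψ x + ε) := by
    intro x hx ε hε
    have hxT : x ∈ Ioo s (s + T) := ⟨ha.trans_lt hx.1, by linarith [hx.2, hσ.2]⟩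
    have hZ : P.nrm q (P.Z (w x)) ≤ (P.M γ / (q - p) + P.Nf γ) * ψ x :=
      (P.Z_bound γ hγ p q (by linarith) hpq hqγ (w x)
        (P.B_mono β hβ p hp hβp (hw.1 x (Ioo_subset_Ico_self hxT)))).trans
        (mul_le_mul_of_nonneg_left (hψ x ⟨hx.1.le, hx.2.le.trans hσ.2⟩) hMN.le)
    filter_upwards [hw.eventually_nrm_S_sub_le hβ hq hβq hxT hx.2 (R := R)
      (by linarith [hx.1, hσ.2]) hε, self_mem_nhdsWithin] with y hy hxy
    refine hy.trans (mul_le_mul_of_nonneg_left ?_ (sub_nonneg.mpr (le_of_lt hxy)))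
    have hC0 := (P.semigroupBound_pos R).le
    calc P.semigroupBound R * P.nrm q (P.Z (w x)) + ε
        ≤ P.semigroupBound R * ((P.M γ / (q - p) + P.Nf γ) * ψ x) + ε := by gcongr
      _ = K * ψ x + ε := by ring
  have hmvi := nrm_sub_le_of_slope_le hq (g := fun y => P.S q (σ - y) (w y))
    (Φ := fun x => K * Ψ x) (φ := fun x => K * ψ x) hσ.1
    (fun y hy => S_mem_B hq (by linarith [hy.2]) (hC y hy))
    (fun x hx ε hε => hw.eventually_nrm_S_sub_lt hβ hq hβq ha (hσ.2.trans_lt hb) hx hε)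
    (fun x => (hΨ x).const_mul K) hslope
  simpa [P.S_id q hq _ (hC σ ⟨hσ.1, le_rfl⟩), hwa, S_zero hq (sub_nonneg.mpr hσ.1),
    P.nrm_zero q hq, mul_sub] using hmvi

open Nat in
/-- `n` Ovsyannikov steps of height `(γ - β)/n` from `B_β` up to `B_γ`. -/
theorem nrm_le_pow_div_factorial (hw : P.IsSol β s T us w) (hβ : β ∈ P.idx) {γ : ℝ}
    (hγ : γ ∈ P.idx) (hβγ : β < γ) {a b R W : ℝ} (ha : s ≤ a) (hb : b < s + T)
    (hR : b - a ≤ R) (hwa : w a = 0) (hW : ∀ x ∈ Icc a b, P.nrm β (w x) ≤ W) {n : ℕ}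
    (hn : 0 < n) {σ : ℝ} (hσ : σ ∈ Icc a b) :
    P.nrm γ (w σ) ≤ W * (P.semigroupBound R *
      (P.M γ / ((γ - β) / n) + P.Nf γ)) ^ n * ((σ - a) ^ n / n !) := by
  set d := (γ - β) / n
  have hd : 0 < d := div_pos (sub_pos.mpr hβγ) (by exact_mod_cast hn)
  have hnd : n * d = γ - β := mul_div_cancel₀ _ (by exact_mod_cast hn.ne')
  set D := P.semigroupBound R * (P.M γ / d + P.Nf γ)
  have hladder : ∀ k ≤ n, ∀ x ∈ Icc a b,
      P.nrm (β + k * d) (w x) ≤ W * D ^ k * ((x - a) ^ k / k !) := by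
    intro k
    induction k with
    | zero => simpa using hW
    | succ k ih =>
      intro hk x hx
      have hkd : (k + 1 : ℝ) * d ≤ n * d := by
        gcongr
        exact_mod_cast hk
      have h := hw.nrm_le_of_nrm_le hβ hγ (p := β + k * d) (q := β + (k + 1 : ℕ) * d)
        (le_add_of_nonneg_right (by positivity)) (by push_cast; linarith)
        (by push_cast; linarith) ha hb hR hwa
        (fun y => (hasDerivAt_sub_pow_succ_div_factorial a k y).const_mul (W * D ^ k))
        (ih (by omega)) hx
      convert h using 1
      push_cast
      simp only [sub_self, ne_eq, add_eq_zero, one_ne_zero, and_false, not_false_eq_true,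
        zero_pow, zero_div, mul_zero, sub_zero, D]
      ring_nf
  simpa [hnd] using hladder n le_rfl σ hσ

theorem nrm_le_exp_one_mul_pow (hw : P.IsSol β s T us w) (hβ : β ∈ P.idx) {γ : ℝ}
    (hγ : γ ∈ P.idx) (hβγ : β < γ) {a b R W : ℝ} (ha : s ≤ a) (hb : b < s + T)
    (hR : b - a ≤ R) (hwa : w a = 0) (hW : ∀ x ∈ Icc a b, P.nrm β (w x) ≤ W) {n : ℕ}
    (hn : 0 < n) {σ : ℝ} (hσ : σ ∈ Icc a b) :
    P.nrm γ (w σ) ≤ W * (Real.exp 1 *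
      (P.semigroupBound R * (P.M γ / (γ - β) + P.Nf γ) * (σ - a))) ^ n := by
  have hC0 := (P.semigroupBound_pos R).le
  have hM := P.M_pos γ hγ
  have hN := P.N_pos γ hγ
  have hγβ := sub_pos.mpr hβγ
  have hσa := sub_nonneg.mpr hσ.1
  have hab : a ∈ Icc a b := ⟨le_rfl, hσ.1.trans hσ.2⟩
  have hW0 : 0 ≤ W := (P.nrm_nonneg β hβ _ (hw.1 a ⟨ha, hb.trans_le' hab.2⟩)).trans (hW a hab)
  have hD : P.semigroupBound R * (P.M γ / ((γ - β) / n) + P.Nf γ) * (σ - a) ≤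
      n * (P.semigroupBound R * (P.M γ / (γ - β) + P.Nf γ) * (σ - a)) := by
    have hNn : P.Nf γ ≤ n * P.Nf γ := le_mul_of_one_le_left hN.le (by exact_mod_cast hn)
    calc P.semigroupBound R * (P.M γ / ((γ - β) / n) + P.Nf γ) * (σ - a)
        = P.semigroupBound R * (n * (P.M γ / (γ - β)) + P.Nf γ) * (σ - a) := by
          rw [div_div_eq_mul_div, mul_div_right_comm, mul_comm (P.M γ / (γ - β))]
      _ ≤ P.semigroupBound R * (n * (P.M γ / (γ - β)) + n * P.Nf γ) * (σ - a) := by gcongr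
      _ = n * (P.semigroupBound R * (P.M γ / (γ - β) + P.Nf γ) * (σ - a)) := by ring
  calc P.nrm γ (w σ)
      ≤ W * (P.semigroupBound R * (P.M γ / ((γ - β) / n) + P.Nf γ)) ^ n *
          ((σ - a) ^ n / n.factorial) :=
        hw.nrm_le_pow_div_factorial hβ hγ hβγ ha hb hR hwa hW hn hσ
    _ ≤ W * ((n * (P.semigroupBound R * (P.M γ / (γ - β) + P.Nf γ) * (σ - a))) ^ n /
          n.factorial) := by
        rw [mul_assoc, ← mul_div_assoc, ← mul_pow]
        gcongr
    _ ≤ _ := by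
        gcongr
        exact pow_mul_div_factorial_le_exp_one_mul_pow n (by positivity)

theorem eq_zero_of_sub_le (hw : P.IsSol β s T us w) (hβ : β ∈ P.idx) {γ : ℝ}
    (hγ : γ ∈ P.idx) (hβγ : β < γ) {a b R W : ℝ} (ha : s ≤ a) (hb : b < s + T)
    (hR : b - a ≤ R) (hwa : w a = 0) (hW : ∀ x ∈ Icc a b, P.nrm β (w x) ≤ W) {σ : ℝ}
    (hσ : σ ∈ Icc a b)
    (hσa : 2 * Real.exp 1 * (P.semigroupBound R * (P.M γ / (γ - β) + P.Nf γ)) * (σ - a) ≤ 1) :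
    w σ = 0 := by
  have hab : a ∈ Icc a b := ⟨le_rfl, hσ.1.trans hσ.2⟩
  have hW0 : 0 ≤ W := (P.nrm_nonneg β hβ _ (hw.1 a ⟨ha, hb.trans_le' hab.2⟩)).trans (hW a hab)
  have hbound : ∀ n : ℕ, 0 < n → P.nrm γ (w σ) ≤ W * (1 / 2) ^ n := fun n hn =>
    (hw.nrm_le_exp_one_mul_pow hβ hγ hβγ ha hb hR hwa hW hn hσ).trans <| by
      have := (P.semigroupBound_pos R).le
      have := P.M_pos γ hγ
      have := P.N_pos γ hγ
      have := sub_pos.mpr hβγ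
      have := sub_nonneg.mpr hσ.1
      gcongr
      linarith
  have hlim : Tendsto (fun n : ℕ => W * (1 / 2 : ℝ) ^ n) atTop (𝓝 0) := by
    simpa using (tendsto_pow_atTop_nhds_zero_of_lt_one (r := (1 / 2 : ℝ)) (by norm_num)
      (by norm_num)).const_mul W
  have hwσ : w σ ∈ P.B γ :=
    P.B_mono β hβ γ hγ hβγ.le (hw.1 σ ⟨ha.trans hσ.1, hσ.2.trans_lt hb⟩)
  refine P.nrm_eq_zero γ hγ _ hwσ (le_antisymm ?_ (P.nrm_nonneg γ hγ _ hwσ))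
  exact ge_of_tendsto hlim ((eventually_gt_atTop 0).mono hbound)

theorem eq_zero (hw : P.IsSol β s T 0 w) (hβ : β ∈ P.idx) {t : ℝ} (ht : t ∈ Ico s (s + T)) :
    w t = 0 := by
  obtain ⟨γ, hγ, hβγ⟩ := P.exists_gt_mem_idx hβ
  obtain ⟨W, hW⟩ := hw.exists_nrm_le hβ ht
  set K₀ := P.semigroupBound (t - s) * (P.M γ / (γ - β) + P.Nf γ)
  have hK₀ : 0 < 2 * Real.exp 1 * K₀ := by
    have := P.semigroupBound_pos (t - s)
    have := P.M_pos γ hγ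
    have := P.N_pos γ hγ
    have := sub_pos.mpr hβγ
    positivity
  have hstep : ∀ j : ℕ, ∀ σ ∈ Icc s t, σ ≤ s + j / (2 * Real.exp 1 * K₀) → w σ = 0 := by
    intro j
    induction j with
    | zero =>
      intro σ hσ hσs
      rw [le_antisymm (by simpa using hσs) hσ.1]
      exact hw.2.2.2.2
    | succ j ih =>
      intro σ hσ hσj
      set a := s + j / (2 * Real.exp 1 * K₀)
      have hsa : s ≤ a := le_add_of_nonneg_right (by positivity)
      rcases le_or_gt σ a with hσa | hσa
      · exact ih σ hσ hσa
      · have haσ : 2 * Real.exp 1 * K₀ * (σ - a) ≤ 1 := by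
          rw [← le_div_iff₀' hK₀]
          push_cast at hσj
          rw [add_div] at hσj
          linarith
        exact hw.eq_zero_of_sub_le hβ hγ hβγ hsa ht.2 (by linarith)
          (ih a ⟨hsa, hσa.le.trans hσ.2⟩ le_rfl) (fun x hx => hW x ⟨hsa.trans hx.1, hx.2⟩)
          ⟨hσa.le, hσ.2⟩ haσ
  obtain ⟨j, hj⟩ := exists_nat_ge ((t - s) * (2 * Real.exp 1 * K₀))
  exact hstep j t ⟨ht.1, le_rfl⟩ (by rw [← sub_le_iff_le_add', le_div_iff₀ hK₀]; exact hj)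

theorem unique {v : ℝ → P.V} (hu : P.IsSol α s T us u) (hv : P.IsSol α s T us v)
    (hα : α ∈ P.idx) {t : ℝ} (ht : t ∈ Ico s (s + T)) : u t = v t := by
  have huv := hu.sub hv hα
  rw [sub_self] at huv
  exact sub_eq_zero.mp (huv.eq_zero hα ht)

end IsSol

end OvsSystem

theorem consistency_of_terminal_spaces_general (P : OvsSystem)
    (αst αstst : ℝ) (hαst : αst ∈ P.idx) (hαstst : αstst ∈ P.idx) (hlt : αst < αstst)
    (s : ℝ) (αs : ℝ)
    (us : P.V)
    (u : ℝ → P.V) (hu : P.IsSol αst s (P.Tt αs αst) us u)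
    (utld : ℝ → P.V) (hutld : P.IsSol αstst s (P.Tt αs αstst) us utld) :
    ∀ t ∈ Set.Ico s (s + min (P.Tt αs αst) (P.Tt αs αstst)),
      utld t = u t ∧ u t ∈ P.B αst := by
  intro t ht
  have hu₀ := hu.mono_time (min_le_left _ (P.Tt αs αstst))
  exact ⟨(hutld.mono_time (min_le_right (P.Tt αs αst) _)).unique
    (hu₀.mono_index hαst hαstst hlt.le) hαstst ht, hu₀.1 t ht⟩

/-- **Remark (consistency of solutions in different terminal spaces).** Under
Assumptions 1–3, let `α* < α**` in `I`, `s ≥ 0`, `α_s ∈ (α̲, α*)`, `u_s ∈ B_{α_s}`,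
`T = T(α_s, α*)`, `T̃ = T(α_s, α**)`, `T₀ = min{T, T̃}`. If `u` solves the IVP in
`B_{α*}` on `[s, s+T)` and `ũ` solves the same IVP in `B_{α**}` on `[s, s+T̃)`,
then `ũ(t) = u(t) ∈ B_{α*}` for all `t ∈ [s, s+T₀)`. -/
theorem consistency_of_terminal_spaces (P : OvsSystem)
    (αst αstst : ℝ) (hαst : αst ∈ P.idx) (hαstst : αstst ∈ P.idx) (hlt : αst < αstst)
    (s : ℝ) (hs : 0 ≤ s) (αs : ℝ) (hαs : αs ∈ Set.Ioo P.aLow αst)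
    (us : P.V) (hus : us ∈ P.B αs)
    (u : ℝ → P.V) (hu : P.IsSol αst s (P.Tt αs αst) us u)
    (utld : ℝ → P.V) (hutld : P.IsSol αstst s (P.Tt αs αstst) us utld) :
    ∀ t ∈ Set.Ico s (s + min (P.Tt αs αst) (P.Tt αs αstst)),
      utld t = u t ∧ u t ∈ P.B αst :=
  consistency_of_terminal_spaces_general P αst αstst hαst hαstst hlt s αs us u hu utld hutld
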